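/- arXiv:2603.07358 — 3 statements merged into one kernel-verified Lean document; each statement's English description precedes it below -/
import Mathlib

section
/- Let E : [0,∞) → ℝ be differentiable and g : [0,∞) → ℝ be a function with 0 ≤ g(t) ≤ 2·E(t) for all t ≥ 0, suppose E(0) > 0 and E'(t) = -E(t)·g(t) for every t ≥ 0. Then E is nonincreasing, E(t) > 0 for all t ≥ 0, and E(t) ≥ (1/E(0) + 2t)⁻¹ for every t ≥ 0. -/
open Set Filter Real
open scoped Topology

/-- Abstract energy identity with nonlocal damping: if `E` is differentiable on `[0,∞)`
with derivative `E'`, `0 ≤ g t ≤ 2 E t`, `E 0 > 0` and `E' t = -(E t) * g t` for `t ≥ 0`,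
then `E` is nonincreasing on `[0,∞)`, positive, and `E t ≥ (1/E 0 + 2 t)⁻¹`. -/
theorem energy_nonlocal_damping_lower_bound (E E' g : ℝ → ℝ)
    (hderiv : ∀ t ∈ Set.Ici (0 : ℝ), HasDerivWithinAt E (E' t) (Set.Ici 0) t)
    (hg0 : ∀ t ≥ (0 : ℝ), 0 ≤ g t)
    (hg2 : ∀ t ≥ (0 : ℝ), g t ≤ 2 * E t)
    (h0 : 0 < E 0)
    (heq : ∀ t ≥ (0 : ℝ), E' t = -(E t) * g t) :
    (∀ s t : ℝ, 0 ≤ s → s ≤ t → E t ≤ E s) ∧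
    (∀ t ≥ (0 : ℝ), 0 < E t) ∧
    (∀ t ≥ (0 : ℝ), ((E 0)⁻¹ + 2 * t)⁻¹ ≤ E t) := by
  set u : ℝ → ℝ := fun t => 1 - E t * ((E 0)⁻¹ + 2 * t) with hu_def
  set u' : ℝ → ℝ := fun t => -(E' t * ((E 0)⁻¹ + 2 * t) + E t * 2) with hu'_def
  have hL : ∀ t : ℝ, 0 ≤ t → 0 < (E 0)⁻¹ + 2 * t := by
    intro t ht
    have := inv_pos.2 h0
    linarith
  have hu : ∀ t ∈ Set.Ici (0 : ℝ), HasDerivWithinAt u (u' t) (Set.Ici 0) t := by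
    intro t ht
    have hlin : HasDerivWithinAt (fun t : ℝ => (E 0)⁻¹ + 2 * t) 2 (Set.Ici 0) t := by
      simpa using (((hasDerivWithinAt_id t (Set.Ici 0)).const_mul 2).const_add ((E 0)⁻¹))
    exact ((hderiv t ht).mul hlin).const_sub 1
  have uCont : ContinuousOn u (Set.Ici 0) := fun t ht => (hu t ht).continuousWithinAt
  have hu0 : u 0 = 0 := by
    simp only [hu_def]
    field_simp
    ring
  -- key claim
  have key : ∀ T : ℝ, 0 ≤ T → u T ≤ 0 := by
    intro T hT0
    by_contra hT
    push_neg at hT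
    set S : Set ℝ := Icc 0 T ∩ u ⁻¹' (Iic 0) with hS_def
    have hScl : IsClosed S :=
      (uCont.mono Icc_subset_Ici_self).preimage_isClosed_of_isClosed isClosed_Icc isClosed_Iic
    have hScomp : IsCompact S := isCompact_Icc.of_isClosed_subset hScl inter_subset_left
    have h0S : (0 : ℝ) ∈ S := ⟨⟨le_refl 0, hT0⟩, by simpa using hu0.le⟩
    set s := sSup S with hs_def
    have hsS : s ∈ S := hScomp.sSup_mem ⟨0, h0S⟩
    have hs0 : 0 ≤ s := hsS.1.1
    have hsT : s ≤ T := hsS.1.2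
    have hpos : ∀ t, s < t → t ≤ T → 0 < u t := by
      intro t hst htT
      by_contra h
      push_neg at h
      have : t ∈ S := ⟨⟨hs0.trans hst.le, htT⟩, h⟩
      exact absurd (le_csSup hScomp.bddAbove this) (not_le.2 hst)
    have hsTlt : s < T := by
      rcases lt_or_eq_of_le hsT with h | h
      · exact h
      · exact absurd (h ▸ hsS.2 : u T ≤ 0) (not_le.2 hT)
    have hus_le : u s ≤ 0 := hsS.2
    -- u s ≥ 0 by right continuity
    have hus_ge : 0 ≤ u s := by
      have hcw : ContinuousWithinAt u (Ioc s T) s :=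
        (uCont s hs0).mono (fun x hx => hs0.trans hx.1.le)
      have hne : (𝓝[Ioc s T] s).NeBot := left_nhdsWithin_Ioc_neBot hsTlt
      refine ge_of_tendsto hcw ?_
      filter_upwards [self_mem_nhdsWithin] with x hx
      exact (hpos x hx.1 hx.2).le
    have hus : u s = 0 := le_antisymm hus_le hus_ge
    -- Gronwall on [s, T]
    have hbound : ∀ x ∈ Ico s T, u' x ≤ 2 * E 0 * u x + 0 := by
      intro x hx
      have hx0 : (0:ℝ) ≤ x := hs0.trans hx.1
      have hux : 0 ≤ u x := by
        rcases eq_or_lt_of_le hx.1 with h | h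
        · rw [← h, hus]
        · exact (hpos x h hx.2.le).le
      have hgx0 := hg0 x hx0
      have hgx2 := hg2 x hx0
      have hLx := hL x hx0
      have hE0L : 1 ≤ E 0 * ((E 0)⁻¹ + 2 * x) := by
        rw [mul_add, mul_inv_cancel₀ h0.ne']
        nlinarith
      have heqx := heq x hx0
      simp only [hu'_def, hu_def, heqx] at *
      nlinarith [mul_nonneg hgx0 hux, mul_nonneg (mul_nonneg hgx0 hLx.le) hux,
        mul_nonneg hux (sub_nonneg.2 hgx2), mul_nonneg (sub_nonneg.2 hgx2) hLx.le,
        mul_nonneg (mul_nonneg (sub_nonneg.2 hgx2) hLx.le) hux]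
    have hgron := le_gronwallBound_of_liminf_deriv_right_le
      (f := u) (f' := u') (δ := 0) (K := 2 * E 0) (ε := 0) (a := s) (b := T)
      (uCont.mono (Icc_subset_Ici_self.trans (by intro x hx; exact le_trans hs0 hx)))
      (fun x hx r hr =>
        ((hu x (hs0.trans hx.1)).mono (Ici_subset_Ici.2 (hs0.trans hx.1))).liminf_right_slope_le hr)
      (hus.le) hbound
    have := hgron T ⟨hsT, le_rfl⟩
    rw [gronwallBound_ε0_δ0] at this
    exact absurd this (not_le.2 hT)
  -- lower bound
  have lower : ∀ t ≥ (0:ℝ), ((E 0)⁻¹ + 2 * t)⁻¹ ≤ E t := by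
    intro t ht
    have hLt := hL t ht
    have h1 : 1 ≤ E t * ((E 0)⁻¹ + 2 * t) := by
      have := key t ht
      simp only [hu_def] at this
      linarith
    rw [inv_eq_one_div]
    rw [div_le_iff₀ hLt]
    linarith
  have pos : ∀ t ≥ (0:ℝ), 0 < E t := fun t ht =>
    lt_of_lt_of_le (inv_pos.2 (hL t ht)) (lower t ht)
  refine ⟨?_, pos, lower⟩
  -- monotonicity
  have hanti : AntitoneOn E (Set.Ici 0) := by
    apply antitoneOn_of_deriv_nonpos (convex_Ici 0)
      (fun t ht => (hderiv t ht).continuousWithinAt)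
    · intro x hx
      rw [interior_Ici] at hx
      exact ((hderiv x (mem_Ici.2 (le_of_lt (mem_Ioi.1 hx)))).hasDerivAt (Ici_mem_nhds hx)).differentiableAt.differentiableWithinAt
    · intro x hx
      rw [interior_Ici] at hx
      have hd := ((hderiv x (mem_Ici.2 (le_of_lt (mem_Ioi.1 hx)))).hasDerivAt (Ici_mem_nhds hx)).deriv
      rw [hd, heq x hx.le]
      have := mul_nonneg (pos x hx.le).le (hg0 x hx.le)
      linarith
  exact fun s t hs hst => hanti hs (hs.trans hst) hst
end

section
/- Let C₁ > 0 and let E : [0,∞) → ℝ be nonincreasing with E(t) ≥ 0 for all t ≥ 0, and suppose that E(t)² ≤ C₁·(E(t) - E(t+1)) for every t ≥ 0. Then there exist constants C₀ > 0 and t₀ > 0 such that E(t) ≤ C₀/t for all t ≥ t₀; indeed one may take E(t) ≤ 2C₁/t for all t ≥ 2. -/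
/-- Nakao's difference-inequality lemma (continuous form): if `E` is nonnegative and
nonincreasing on `[0,∞)` and `E(t)² ≤ C₁ (E(t) - E(t+1))` for all `t ≥ 0`, then `E`
decays like `1/t`; indeed `E t ≤ 2 C₁ / t` for all `t ≥ 2`. -/
theorem nakao_decay (C₁ : ℝ) (hC : 0 < C₁) (E : ℝ → ℝ)
    (hmono : ∀ s t : ℝ, 0 ≤ s → s ≤ t → E t ≤ E s)
    (hnn : ∀ t ≥ (0 : ℝ), 0 ≤ E t)
    (hineq : ∀ t ≥ (0 : ℝ), (E t) ^ 2 ≤ C₁ * (E t - E (t + 1))) :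
    (∃ C₀ > (0 : ℝ), ∃ t₀ > (0 : ℝ), ∀ t ≥ t₀, E t ≤ C₀ / t) ∧
    (∀ t ≥ (2 : ℝ), E t ≤ 2 * C₁ / t) := by
  have key : ∀ n : ℕ, (n : ℝ) * E n ≤ C₁ := by
    intro n
    induction n with
    | zero => simpa using hC.le
    | succ n ih =>
      have hn0 : (0 : ℝ) ≤ (n : ℝ) := Nat.cast_nonneg n
      have hEn1 : 0 ≤ E ((n : ℝ) + 1) := hnn _ (by linarith)
      push_cast
      rcases eq_or_lt_of_le hEn1 with h0 | hpos
      · rw [← h0]; simpa using hC.le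
      · have hle : E ((n : ℝ) + 1) ≤ E n := hmono n ((n : ℝ) + 1) hn0 (by linarith)
        have hEn : 0 < E (n : ℝ) := lt_of_lt_of_le hpos hle
        have hin := hineq n hn0
        nlinarith [mul_le_mul_of_nonneg_right ih hpos.le,
          mul_pos hEn hpos, sq_nonneg (E (n : ℝ) - E ((n : ℝ) + 1))]
  have main : ∀ t ≥ (2 : ℝ), E t ≤ 2 * C₁ / t := by
    intro t ht
    have ht0 : (0 : ℝ) < t := by linarith
    set n := ⌊t⌋₊ with hn
    have hn2 : (2 : ℕ) ≤ n := Nat.le_floor (by exact_mod_cast ht)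
    have hnle : (n : ℝ) ≤ t := Nat.floor_le (by linarith)
    have hlt : t < (n : ℝ) + 1 := Nat.lt_floor_add_one t
    have hn2' : (2 : ℝ) ≤ (n : ℝ) := by exact_mod_cast hn2
    have hEtn : E t ≤ E n := hmono n t (by linarith) hnle
    have hk := key n
    have hEt : 0 ≤ E t := hnn t (by linarith)
    rw [le_div_iff₀ ht0]
    nlinarith [mul_le_mul_of_nonneg_right hEtn (le_of_lt ht0)]
  exact ⟨⟨2 * C₁, by linarith, 2, by norm_num, main⟩, main⟩
end

section
/- Let C > 0 and let (a_n)_{n≥0} be a sequence of real numbers with a_n ≥ 0, a_{n+1} ≤ a_n, and a_n² ≤ C·(a_n - a_{n+1}) for every n ≥ 0. Then a_n ≤ C/n for every n ≥ 2. -/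
/-- Nakao's difference-inequality lemma (discrete form): if `a` is a nonnegative
nonincreasing sequence with `aₙ² ≤ C (aₙ - aₙ₊₁)`, then `aₙ ≤ C / n` for `n ≥ 2`. -/
theorem nakao_discrete (C : ℝ) (hC : 0 < C) (a : ℕ → ℝ)
    (hnn : ∀ n, 0 ≤ a n)
    (hmono : ∀ n, a (n + 1) ≤ a n)
    (hrec : ∀ n, (a n) ^ 2 ≤ C * (a n - a (n + 1))) :
    ∀ n ≥ 2, a n ≤ C / (n : ℝ) := by
  have key : ∀ n, 1 ≤ n → 0 < a n → (n : ℝ) / C ≤ 1 / a n := by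
    intro n hn
    induction n, hn using Nat.le_induction with
    | base =>
      intro h1
      have h := hrec 1
      have hle : a 1 ≤ C := by
        nlinarith [hnn 2, hmono 1]
      rw [Nat.cast_one, div_le_div_iff₀ hC h1]
      linarith
    | succ n hn ih =>
      intro hpos
      have hansucc : 0 < a n := lt_of_lt_of_le hpos (hmono n)
      have ihn := ih hansucc
      have h := hrec n
      -- 1/a(n+1) ≥ 1/a n + 1/C
      have step : 1 / a n + 1 / C ≤ 1 / a (n + 1) := by
        rw [div_add_div _ _ (ne_of_gt hansucc) (ne_of_gt hC),
          div_le_div_iff₀ (by positivity) hpos]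
        nlinarith [hmono n]
      push_cast
      calc ((n : ℝ) + 1) / C = (n : ℝ) / C + 1 / C := by ring
        _ ≤ 1 / a n + 1 / C := by linarith
        _ ≤ 1 / a (n + 1) := step
  intro n hn
  rcases eq_or_lt_of_le (hnn n) with h0 | hpos
  · rw [← h0]; positivity
  · have hn1 : 1 ≤ n := le_trans (by norm_num) hn
    have hk := key n hn1 hpos
    have hnpos : (0 : ℝ) < n := by exact_mod_cast Nat.lt_of_lt_of_le Nat.zero_lt_one hn1
    rw [div_le_div_iff₀ hC hpos] at hk
    rw [le_div_iff₀ hnpos]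
    linarith [hk]
end
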